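/- A group G is isomorphic to a right-angled Artin group AΓ for some graph Γ if and only if G admits an AC-coalgebra structure, i.e. there exists a group homomorphism 𝔤 : G → ACG satisfying ε_G ∘ 𝔤 = id_G and (AC𝔤) ∘ 𝔤 = δ_G ∘ 𝔤. -/

import Mathlib

/-- A (reflexive, symmetric) graph: a set of vertices with a reflexive
symmetric relation. -/
structure Gph : Type 1 where
  V : Type
  rel : V → V → Prop
  refl : ∀ v, rel v v
  symm : ∀ {v w}, rel v w → rel w v

/-- A homomorphism of graphs: a function on vertices preserving the relation. -/
@[ext]
structure GphHom (Γ Δ : Gph) where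
  toFun : Γ.V → Δ.V
  map_rel : ∀ {v w}, Γ.rel v w → Δ.rel (toFun v) (toFun w)

/-- The identity graph homomorphism. -/
def GphHom.id (Γ : Gph) : GphHom Γ Γ :=
  ⟨fun v => v, fun h => h⟩

/-- Composition of graph homomorphisms. -/
def GphHom.comp {Γ Δ Θ : Gph} (ψ : GphHom Δ Θ) (φ : GphHom Γ Δ) : GphHom Γ Θ :=
  ⟨fun v => ψ.toFun (φ.toFun v), fun h => ψ.map_rel (φ.map_rel h)⟩

/-- The commutator relators of the right-angled Artin group of `Γ`. -/
def raagRels (Γ : Gph) : Set (FreeGroup Γ.V) :=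
  { r | ∃ v w, Γ.rel v w ∧
      r = FreeGroup.of v * FreeGroup.of w * (FreeGroup.of v)⁻¹ * (FreeGroup.of w)⁻¹ }

/-- The right-angled Artin group of a graph `Γ`: generated by the vertices,
with commutation relations given by the edges. -/
abbrev Raag (Γ : Gph) : Type :=
  PresentedGroup (raagRels Γ)

/-- The image of a vertex `v` as a generator of the right-angled Artin group. -/
def Raag.of {Γ : Gph} (v : Γ.V) : Raag Γ :=
  PresentedGroup.of v

/-- Related vertices commute in the right-angled Artin group. -/
theorem Raag.commute_of {Γ : Gph} {v w : Γ.V} (h : Γ.rel v w) :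
    Commute (Raag.of v) (Raag.of w) := by
  have h1 : (PresentedGroup.mk (raagRels Γ))
      (FreeGroup.of v * FreeGroup.of w * (FreeGroup.of v)⁻¹ * (FreeGroup.of w)⁻¹) = 1 := by
    apply (QuotientGroup.eq_one_iff _).2
    exact Subgroup.subset_normalClosure ⟨v, w, h, rfl⟩
  rw [← commutatorElement_eq_one_iff_commute]
  simpa only [commutatorElement_def, map_mul, map_inv, Raag.of, PresentedGroup.of] using h1

/-- The universal property of the right-angled Artin group. -/
def Raag.lift {Γ : Gph} {G : Type*} [Group G] (f : Γ.V → G)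
    (hf : ∀ {v w}, Γ.rel v w → Commute (f v) (f w)) : Raag Γ →* G :=
  PresentedGroup.toGroup (f := f) (by
    rintro r ⟨v, w, hvw, rfl⟩
    have := commutatorElement_eq_one_iff_commute.2 (hf hvw)
    rw [commutatorElement_def] at this
    simpa only [map_mul, map_inv, FreeGroup.lift_apply_of] using this)

@[simp]
theorem Raag.lift_of {Γ : Gph} {G : Type*} [Group G] (f : Γ.V → G)
    (hf : ∀ {v w}, Γ.rel v w → Commute (f v) (f w)) (v : Γ.V) :
    Raag.lift f hf (Raag.of v) = f v :=
  PresentedGroup.toGroup.of _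

theorem Raag.hom_ext {Γ : Gph} {G : Type*} [Group G] {f g : Raag Γ →* G}
    (h : ∀ v, f (Raag.of v) = g (Raag.of v)) : f = g :=
  PresentedGroup.ext h

/-- The group homomorphism `Aφ` induced by a graph homomorphism `φ`. -/
def GphHom.map {Γ Δ : Gph} (φ : GphHom Γ Δ) : Raag Γ →* Raag Δ :=
  Raag.lift (fun v => Raag.of (φ.toFun v)) (fun h => Raag.commute_of (φ.map_rel h))

@[simp]
theorem GphHom.map_of {Γ Δ : Gph} (φ : GphHom Γ Δ) (v : Γ.V) :
    φ.map (Raag.of v) = Raag.of (φ.toFun v) :=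
  Raag.lift_of _ (fun h => Raag.commute_of (φ.map_rel h)) v

/-- The commutation graph of a group `G`: vertices are elements of `G`,
related exactly when they commute. -/
abbrev commGraph (G : Type) [Group G] : Gph where
  V := G
  rel g h := g * h = h * g
  refl _ := rfl
  symm h := h.symm

/-- `AC G`: the right-angled Artin group of the commutation graph of `G`. -/
abbrev AC (G : Type) [Group G] : Type :=
  Raag (commGraph G)

/-- `ACf : ACG →* ACH`, `[g] ↦ [f g]`, induced by a group homomorphism `f`. -/
def ACmap {G H : Type} [Group G] [Group H] (f : G →* H) : AC G →* AC H :=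
  GphHom.map (Γ := commGraph G) (Δ := commGraph H)
    ⟨f, fun {a b} h => show f a * f b = f b * f a by
      rw [← map_mul, show a * b = b * a from h, map_mul]⟩

@[simp]
theorem ACmap_of {G H : Type} [Group G] [Group H] (f : G →* H) (g : G) :
    ACmap f (Raag.of (Γ := commGraph G) g) = Raag.of (Γ := commGraph H) (f g) :=
  GphHom.map_of _ _

/-- The counit `ε_G : ACG →* G`, `[g] ↦ g`. -/
def ACcounit (G : Type) [Group G] : AC G →* G :=
  Raag.lift (Γ := commGraph G) (fun g => g) (fun h => h)

@[simp]
theorem ACcounit_of {G : Type} [Group G] (g : G) :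
    ACcounit G (Raag.of (Γ := commGraph G) g) = g :=
  Raag.lift_of (Γ := commGraph G) (fun g => g) (fun h => h) g

/-- The comultiplication `δ_G : ACG →* AC(ACG)`, `[g] ↦ [[g]]`. -/
def ACcomul (G : Type) [Group G] : AC G →* AC (AC G) :=
  Raag.lift (Γ := commGraph G)
    (fun g => Raag.of (Γ := commGraph (AC G)) (Raag.of (Γ := commGraph G) g))
    (fun h => Raag.commute_of (Raag.commute_of h))

@[simp]
theorem ACcomul_of {G : Type} [Group G] (g : G) :
    ACcomul G (Raag.of (Γ := commGraph G) g) =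
      Raag.of (Γ := commGraph (AC G)) (Raag.of (Γ := commGraph G) g) :=
  Raag.lift_of (Γ := commGraph G) _ (fun h => Raag.commute_of (Raag.commute_of h)) g

/-- The canonical `AC`-coalgebra structure map on a right-angled Artin group,
sending each vertex generator `v` to `[v]`. -/
def raagCoalgStr (Γ : Gph) : Raag Γ →* AC (Raag Γ) :=
  Raag.lift (fun v => Raag.of (Γ := commGraph (Raag Γ)) (Raag.of v))
    (fun h => Raag.commute_of (Raag.commute_of h))

@[simp]
theorem raagCoalgStr_of {Γ : Gph} (v : Γ.V) :
    raagCoalgStr Γ (Raag.of v) = Raag.of (Γ := commGraph (Raag Γ)) (Raag.of v) :=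
  Raag.lift_of _ (fun h => Raag.commute_of (Raag.commute_of h)) v

/-- An `AC`-coalgebra structure on a group `G` is a group homomorphism
`𝔤 : G →* ACG` satisfying the counit and coassociativity laws. -/
def IsACCoalgebra {G : Type} [Group G] (𝔤 : G →* AC G) : Prop :=
  (ACcounit G).comp 𝔤 = MonoidHom.id G ∧ (ACmap 𝔤).comp 𝔤 = (ACcomul G).comp 𝔤

/-- `f` is an `AC`-cohomomorphism from `(G, 𝔤)` to `(H, 𝔥)`. -/
def IsACCohom {G H : Type} [Group G] [Group H]
    (𝔤 : G →* AC G) (𝔥 : H →* AC H) (f : G →* H) : Prop :=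
  𝔥.comp f = (ACmap f).comp 𝔤

/-! A right-angled Artin group carries the structure `v ↦ [v]`, and such a structure can be
transported along isomorphisms. Conversely, let `𝔤` be an `AC`-coalgebra structure on `G` and
`S = {g | 𝔤 g = [g]}`. The map `θ : AC(ACG) → ACG`, `[x] ↦ x` if `x` is a generator `[g]` and
`[x] ↦ 1` otherwise, is a left inverse of `δ_G`, while the counit law makes `θ ∘ AC𝔤` the
retraction of `ACG` onto the special subgroup on `S`. Coassociativity therefore says that `𝔤`
lands in that subgroup, which is the right-angled Artin group of the commutation graph induced
on `S`, and there the counit law makes `𝔤` inverse to evaluation. -/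

section Induce

variable {Γ : Gph}

abbrev Gph.induce (Γ : Gph) (S : Set Γ.V) : Gph where
  V := S
  rel a b := Γ.rel a b
  refl a := Γ.refl a
  symm h := Γ.symm h

@[simps]
def Gph.induceInclusion (Γ : Gph) (S : Set Γ.V) : GphHom (Γ.induce S) Γ :=
  ⟨Subtype.val, id⟩

open Classical in
theorem Raag.commute_dite_of_rel (S : Set Γ.V) {v w : Γ.V} (h : Γ.rel v w) :
    Commute (if hv : v ∈ S then Raag.of (Γ := Γ.induce S) ⟨v, hv⟩ else 1)
      (if hw : w ∈ S then Raag.of (Γ := Γ.induce S) ⟨w, hw⟩ else 1) := by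
  by_cases hv : v ∈ S <;> by_cases hw : w ∈ S <;>
    simp only [hv, hw, dite_true, dite_false, Commute.one_left, Commute.one_right]
  exact Raag.commute_of (Γ := Γ.induce S) (v := ⟨v, hv⟩) (w := ⟨w, hw⟩) h

open Classical in
noncomputable def Raag.restrict (S : Set Γ.V) : Raag Γ →* Raag (Γ.induce S) :=
  Raag.lift (fun v => if hv : v ∈ S then Raag.of (Γ := Γ.induce S) ⟨v, hv⟩ else 1)
    (Raag.commute_dite_of_rel S)

open Classical in
@[simp]
theorem Raag.restrict_of (S : Set Γ.V) (v : Γ.V) :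
    Raag.restrict S (Raag.of v) = if hv : v ∈ S then Raag.of (Γ := Γ.induce S) ⟨v, hv⟩ else 1 :=
  Raag.lift_of _ _ v

noncomputable def Raag.retract (S : Set Γ.V) : Raag Γ →* Raag Γ :=
  ((Γ.induceInclusion S).map).comp (Raag.restrict S)

open Classical in
@[simp]
theorem Raag.retract_of (S : Set Γ.V) (v : Γ.V) :
    Raag.retract S (Raag.of v) = if v ∈ S then Raag.of v else 1 := by
  by_cases hv : v ∈ S <;> simp [Raag.retract, hv]

end Induce

noncomputable def Raag.generatorRetraction (Γ : Gph) : AC (Raag Γ) →* Raag Γ :=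
  (ACcounit (Raag Γ)).comp (Raag.retract (Set.range Raag.of))

theorem Raag.generatorRetraction_comp_raagCoalgStr (Γ : Gph) :
    (Raag.generatorRetraction Γ).comp (raagCoalgStr Γ) = MonoidHom.id (Raag Γ) :=
  Raag.hom_ext fun v => by simp [Raag.generatorRetraction]

theorem IsACCoalgebra.of_closure_eq_top {G : Type} [Group G] {𝔤 : G →* AC G} {X : Set G}
    (hX : Subgroup.closure X = ⊤) (h𝔤 : ∀ x ∈ X, 𝔤 x = Raag.of (Γ := commGraph G) x) :
    IsACCoalgebra 𝔤 :=
  ⟨MonoidHom.eq_of_eqOn_dense hX fun x hx => by simp [h𝔤 x hx],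
    MonoidHom.eq_of_eqOn_dense hX fun x hx => by simp [h𝔤 x hx]⟩

theorem isACCoalgebra_of_mulEquiv_raag {G : Type} [Group G] {Γ : Gph} (e : G ≃* Raag Γ) :
    IsACCoalgebra ((ACmap e.symm.toMonoidHom).comp ((raagCoalgStr Γ).comp e.toMonoidHom)) := by
  refine IsACCoalgebra.of_closure_eq_top (X := e.symm.toMonoidHom '' Set.range Raag.of) ?_ ?_
  · rw [← MonoidHom.map_closure, show Subgroup.closure (Set.range (Raag.of (Γ := Γ))) = ⊤ from
      PresentedGroup.closure_range_of _]
    exact Subgroup.map_top_of_surjective _ e.symm.surjective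
  · rintro _ ⟨_, ⟨v, rfl⟩, rfl⟩
    simp

def MonoidHom.acGenerators {G : Type} [Group G] (𝔤 : G →* AC G) : Set G :=
  {g | 𝔤 g = Raag.of (Γ := commGraph G) g}

section Coalgebra

variable {G : Type} [Group G] {𝔤 : G →* AC G}

theorem generatorRetraction_comp_ACmap (hε : ∀ g, ACcounit G (𝔤 g) = g) :
    (Raag.generatorRetraction (commGraph G)).comp (ACmap 𝔤) =
      Raag.retract 𝔤.acGenerators := by
  refine Raag.hom_ext fun g => ?_
  have hrange : 𝔤 g ∈ Set.range Raag.of ↔ g ∈ 𝔤.acGenerators := by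
    refine ⟨fun ⟨a, ha⟩ => ?_, fun hg => ⟨g, hg.symm⟩⟩
    have hag : a = g := by rw [← hε g, ← ha, ACcounit_of]
    show 𝔤 g = Raag.of g
    rw [← ha, hag]
  by_cases hg : g ∈ 𝔤.acGenerators
  · simp only [Raag.generatorRetraction, MonoidHom.comp_apply, ACmap_of, Raag.retract_of,
      hrange.2 hg, hg, if_true, ACcounit_of]
    exact hg
  · simp [Raag.generatorRetraction, mt hrange.1 hg, hg]

theorem IsACCoalgebra.retract_comp (h𝔤 : IsACCoalgebra 𝔤) :
    (Raag.retract 𝔤.acGenerators).comp 𝔤 = 𝔤 := by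
  set θ := Raag.generatorRetraction (commGraph G)
  calc (Raag.retract 𝔤.acGenerators).comp 𝔤
      = (θ.comp (ACmap 𝔤)).comp 𝔤 := by
        rw [generatorRetraction_comp_ACmap (DFunLike.congr_fun h𝔤.1)]
    _ = θ.comp ((ACcomul G).comp 𝔤) := by rw [MonoidHom.comp_assoc, h𝔤.2]
    _ = (θ.comp (raagCoalgStr (commGraph G))).comp 𝔤 := rfl
    _ = 𝔤 := by rw [Raag.generatorRetraction_comp_raagCoalgStr, MonoidHom.id_comp]

noncomputable def IsACCoalgebra.mulEquivRaag (h𝔤 : IsACCoalgebra 𝔤) :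
    G ≃* Raag ((commGraph G).induce 𝔤.acGenerators) :=
  MonoidHom.toMulEquiv ((Raag.restrict _).comp 𝔤)
    ((ACcounit G).comp ((commGraph G).induceInclusion _).map)
    (by
      calc _ = (ACcounit G).comp ((Raag.retract 𝔤.acGenerators).comp 𝔤) := rfl
        _ = MonoidHom.id G := by rw [h𝔤.retract_comp, h𝔤.1])
    (Raag.hom_ext fun ⟨g, hg⟩ => by simp [show 𝔤 g = Raag.of g from hg, hg])

end Coalgebra

/-- A group `G` is isomorphic to a right-angled Artin group `AΓ` for some graph
`Γ` if and only if `G` admits an `AC`-coalgebra structure, i.e. a group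
homomorphism `𝔤 : G →* ACG` with `ε_G ∘ 𝔤 = id_G` and `(AC𝔤) ∘ 𝔤 = δ_G ∘ 𝔤`. -/
theorem isomorphic_to_raag_iff_accoalgebra (G : Type) [Group G] :
    (∃ Γ : Gph, Nonempty (G ≃* Raag Γ)) ↔
      ∃ 𝔤 : G →* AC G, (ACcounit G).comp 𝔤 = MonoidHom.id G ∧
        (ACmap 𝔤).comp 𝔤 = (ACcomul G).comp 𝔤 := by
  constructor
  · rintro ⟨Γ, ⟨e⟩⟩
    exact ⟨_, isACCoalgebra_of_mulEquiv_raag e⟩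
  · rintro ⟨𝔤, h𝔤⟩
    exact ⟨_, ⟨IsACCoalgebra.mulEquivRaag h𝔤⟩⟩
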